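/- arXiv:2204.00326 — 2 statements merged into one kernel-verified Lean document; each statement's English description precedes it below -/
import Mathlib

section
/- Let A be an m × n matrix over ℂ of rank r, and let I : Fin r → Fin m and J : Fin r → Fin n be injective maps of row and column indices such that the r × r submatrix A[I, J] (with entries A (I i) (J j)) is invertible. Then A factors exactly through its cross: A = A[·, J] · A[I, J]⁻¹ · A[I, ·], where A[·, J] is the m × r matrix of the selected columns and A[I, ·] is the r × n matrix of the selected rows. -/
/-! Since the pivot block is invertible, the selected columns `A[·, J]` are linearly independent.
They lie in the column space of `A`, which has dimension `r`, so they span it and `A = A[·, J] * X`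
for some `X`. Restricting to the pivot rows gives `A[I, ·] = A[I, J] * X`, which forces
`X = A[I, J]⁻¹ * A[I, ·]`. -/

open Matrix

namespace Matrix

variable {R K : Type*} {m n r : Type*}

theorem exists_eq_mul_of_range_mulVecLin_le [CommSemiring R] [Fintype n] [Fintype r]
    [DecidableEq n] {A : Matrix m n R} {B : Matrix m r R}
    (h : LinearMap.range A.mulVecLin ≤ LinearMap.range B.mulVecLin) :
    ∃ X : Matrix r n R, A = B * X := by
  have hcol (j : n) : ∃ x, B *ᵥ x = A.col j := h ⟨Pi.single j 1, mulVec_single_one A j⟩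
  choose x hx using hcol
  refine ⟨(of x)ᵀ, ?_⟩
  ext i j
  exact congrFun (hx j).symm i

theorem submatrix_id_eq_mul_one_submatrix [NonAssocSemiring R] [Fintype n] [DecidableEq n]
    (A : Matrix m n R) (J : r → n) :
    A.submatrix id J = A * (1 : Matrix n n R).submatrix id J := by
  ext i k
  simp [mul_apply, one_apply]

theorem exists_eq_submatrix_id_mul_of_rank_le [Field K] [Fintype n] [Fintype r]
    [DecidableEq n] {A : Matrix m n K} {J : r → n}
    (hcols : Function.Injective (A.submatrix id J).mulVec)
    (hrank : A.rank ≤ Fintype.card r) :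
    ∃ X : Matrix r n K, A = A.submatrix id J * X := by
  apply exists_eq_mul_of_range_mulVecLin_le
  have hle : LinearMap.range (A.submatrix id J).mulVecLin ≤ LinearMap.range A.mulVecLin := by
    rw [submatrix_id_eq_mul_one_submatrix, mulVecLin_mul]
    exact LinearMap.range_comp_le_range _ _
  refine (Submodule.eq_of_le_of_finrank_le hle ?_).ge
  rw [LinearMap.finrank_range_of_inj (f := (A.submatrix id J).mulVecLin) hcols,
    Module.finrank_fintype_fun_eq_card]
  exact hrank

theorem mulVec_submatrix_id_injective [Field K] [Fintype r] [DecidableEq r]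
    {A : Matrix m n K} {I : r → m} {J : r → n} (hpivot : IsUnit (A.submatrix I J)) :
    Function.Injective (A.submatrix id J).mulVec := fun _ _ hxy =>
  mulVec_injective_iff_isUnit.2 hpivot (congrArg (· ∘ I) hxy)

theorem eq_inv_mul_submatrix_of_eq_mul [CommRing R] [Fintype r] [DecidableEq r]
    {A : Matrix m n R} {B : Matrix m r R} {X : Matrix r n R} (hA : A = B * X) {I : r → m}
    (hpivot : IsUnit (B.submatrix I id)) :
    X = (B.submatrix I id)⁻¹ * A.submatrix I id := by
  have hrows : A.submatrix I id = B.submatrix I id * X := by rw [hA]; rfl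
  rw [hrows]
  exact (nonsing_inv_mul_cancel_left _ _ ((isUnit_iff_isUnit_det _).1 hpivot)).symm

end Matrix

theorem cross_decomposition_exact_general
    (m n r : ℕ) (A : Matrix (Fin m) (Fin n) ℂ)
    (hrank : A.rank = r)
    (I : Fin r → Fin m) (J : Fin r → Fin n)
    (hpivot : IsUnit (A.submatrix I J)) :
    A = A.submatrix id J * (A.submatrix I J)⁻¹ * A.submatrix I id := by
  obtain ⟨X, hX⟩ := exists_eq_submatrix_id_mul_of_rank_le
    (mulVec_submatrix_id_injective hpivot) (hrank.trans (Fintype.card_fin r).symm).le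
  have hXeq : X = (A.submatrix I J)⁻¹ * A.submatrix I id :=
    eq_inv_mul_submatrix_of_eq_mul hX hpivot
  rwa [Matrix.mul_assoc, ← hXeq]

theorem cross_decomposition_exact
    (m n r : ℕ) (A : Matrix (Fin m) (Fin n) ℂ)
    (hrank : A.rank = r)
    (I : Fin r → Fin m) (J : Fin r → Fin n)
    (hI : Function.Injective I) (hJ : Function.Injective J)
    (hpivot : IsUnit (A.submatrix I J)) :
    A = A.submatrix id J * (A.submatrix I J)⁻¹ * A.submatrix I id :=
  cross_decomposition_exact_general m n r A hrank I J hpivot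
end

section
/- Let A be an m × n matrix over ℂ, and let I : Fin k → Fin m and J : Fin k → Fin n be injective maps such that the k × k submatrix A[I, J] is invertible. Define the cross approximation B := A[·, J] · A[I, J]⁻¹ · A[I, ·]. Then B agrees with A on the selected rows and columns: for every i in the range of I and every column index j, B i j = A i j, and for every row index i and every j in the range of J, B i j = A i j. -/
/-!
The cross approximation `C = A[·, c] · A[r, c]⁻¹ · A[r, ·]` restricted to the pivot rows is
`A[r, c] · A[r, c]⁻¹ · A[r, ·] = A[r, ·]`, and restricted to the pivot columns it is
`A[·, c] · A[r, c]⁻¹ · A[r, c] = A[·, c]`.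
-/

namespace Matrix

variable {m n ι R : Type*} [Fintype ι] [DecidableEq ι] [CommRing R]

noncomputable def crossApprox (A : Matrix m n R) (r : ι → m) (c : ι → n) : Matrix m n R :=
  A.submatrix id c * (A.submatrix r c)⁻¹ * A.submatrix r id

variable (A : Matrix m n R) (r : ι → m) (c : ι → n)

theorem crossApprox_submatrix_rows (h : IsUnit (A.submatrix r c)) :
    (crossApprox A r c).submatrix r id = A.submatrix r id :=
  calc (crossApprox A r c).submatrix r id
      = A.submatrix r c * (A.submatrix r c)⁻¹ * A.submatrix r id := by
        rw [crossApprox, submatrix_mul _ _ r id id Function.bijective_id,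
          submatrix_mul _ _ r id id Function.bijective_id, submatrix_submatrix, submatrix_id_id,
          Function.comp_id, Function.id_comp, submatrix_id_id]
    _ = A.submatrix r id := by
        rw [mul_nonsing_inv _ ((isUnit_iff_isUnit_det _).mp h), Matrix.one_mul]

theorem crossApprox_submatrix_cols (h : IsUnit (A.submatrix r c)) :
    (crossApprox A r c).submatrix id c = A.submatrix id c :=
  calc (crossApprox A r c).submatrix id c
      = A.submatrix id c * ((A.submatrix r c)⁻¹ * A.submatrix r c) := by
        rw [crossApprox, submatrix_mul _ _ id id c Function.bijective_id, submatrix_submatrix,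
          submatrix_id_id, Function.comp_id, Function.id_comp, Matrix.mul_assoc]
    _ = A.submatrix id c := by
        rw [nonsing_inv_mul _ ((isUnit_iff_isUnit_det _).mp h), Matrix.mul_one]

end Matrix

theorem cross_approximation_interpolates_general
    (m n k : ℕ) (A : Matrix (Fin m) (Fin n) ℂ)
    (I : Fin k → Fin m) (J : Fin k → Fin n)
    (hpivot : IsUnit (A.submatrix I J)) :
    (∀ i ∈ Set.range I, ∀ j,
        (A.submatrix id J * (A.submatrix I J)⁻¹ * A.submatrix I id) i j = A i j) ∧
    (∀ i, ∀ j ∈ Set.range J,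
        (A.submatrix id J * (A.submatrix I J)⁻¹ * A.submatrix I id) i j = A i j) := by
  constructor
  · rintro _ ⟨t, rfl⟩ j
    exact congrFun₂ (A.crossApprox_submatrix_rows I J hpivot) t j
  · rintro i _ ⟨s, rfl⟩
    exact congrFun₂ (A.crossApprox_submatrix_cols I J hpivot) i s

theorem cross_approximation_interpolates
    (m n k : ℕ) (A : Matrix (Fin m) (Fin n) ℂ)
    (I : Fin k → Fin m) (J : Fin k → Fin n)
    (hI : Function.Injective I) (hJ : Function.Injective J)
    (hpivot : IsUnit (A.submatrix I J)) :
    (∀ i ∈ Set.range I, ∀ j,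
        (A.submatrix id J * (A.submatrix I J)⁻¹ * A.submatrix I id) i j = A i j) ∧
    (∀ i, ∀ j ∈ Set.range J,
        (A.submatrix id J * (A.submatrix I J)⁻¹ * A.submatrix I id) i j = A i j) :=
  cross_approximation_interpolates_general m n k A I J hpivot
end
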